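/- arXiv:0911.3557 — 2 statements merged into one kernel-verified Lean document; each statement's English description precedes it below -/
import Mathlib

section
/- Let β ∈ (0,1) and let q, q' be positive rationals with q > q'. If A, A' ∈ (0, 1/(1+β)) satisfy q·T₁(β,A) = T₂(β,A) and q'·T₁(β,A') = T₂(β,A'), then A < A'. (That is, the function q ↦ Â₁(β,q) defined implicitly by q·T₁(β,Â₁) = T₂(β,Â₁) is strictly decreasing on the positive rationals.) -/
/-!
`T₂` is a positive constant times `A₁^{-1/2}`, so it is strictly decreasing in `A₁`, while `T₁` is
nondecreasing: both the prefactor `(1 - 4βA₁²)^{-1/4}` and the modulus `κ₁²` increase with `A₁`,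
and `K` is increasing in `κ²`. Hence `T₂ / T₁` is strictly decreasing on `(0, 1/(1+β))`, and
the solution of `q = T₂ / T₁` decreases as `q` increases. The only analytic input is the
integrability of the integrand of `K`, which is `(1 - v)^{-1/2}` times a continuous function.
-/

open Real Filter Topology

/-- The complete elliptic integral of the first kind,
`K(κ) = ∫₀¹ dv / √((1 - v²)(1 - κ² v²))`. -/
noncomputable def K (κ : ℝ) : ℝ :=
  ∫ v in (0:ℝ)..1, 1 / Real.sqrt ((1 - v ^ 2) * (1 - κ ^ 2 * v ^ 2))

/-- The modulus `κ₁(β, A₁)`, defined by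
`κ₁² = (A₁(1-β) + √(1-4βA₁²)) / (2√(1-4βA₁²))`. -/
noncomputable def κ₁ (β A₁ : ℝ) : ℝ :=
  Real.sqrt ((A₁ * (1 - β) + Real.sqrt (1 - 4 * β * A₁ ^ 2)) /
    (2 * Real.sqrt (1 - 4 * β * A₁ ^ 2)))

/-- The modulus `κ₂(β)`, defined by `κ₂² = β/(1+β)`. -/
noncomputable def κ₂ (β : ℝ) : ℝ := Real.sqrt (β / (1 + β))

/-- The period `T₁(β,A₁) = 2√(2/a) (1-4βA₁²)^{-1/4} K(κ₁(β,A₁))` of the ξ-motion. -/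
noncomputable def T₁ (a β A₁ : ℝ) : ℝ :=
  2 * Real.sqrt (2 / a) / (1 - 4 * β * A₁ ^ 2) ^ ((1:ℝ)/4) * K (κ₁ β A₁)

/-- The period `T₂(β,A₁) = 2/√(a A₁ (1+β)) · K(κ₂(β))` of the φ-motion. -/
noncomputable def T₂ (a β A₁ : ℝ) : ℝ :=
  2 / Real.sqrt (a * A₁ * (1 + β)) * K (κ₂ β)

open Set

noncomputable def KIntegrand (κ v : ℝ) : ℝ := 1 / √((1 - v ^ 2) * (1 - κ ^ 2 * v ^ 2))

lemma KIntegrand_pos {κ v : ℝ} (hκ : κ ^ 2 ≤ 1) (hv : v ^ 2 < 1) : 0 < KIntegrand κ v :=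
  one_div_pos.2 (sqrt_pos.2 (mul_pos (by linarith) (by nlinarith)))

lemma KIntegrand_le_KIntegrand {κ κ' v : ℝ} (hκ' : κ' ^ 2 ≤ κ ^ 2) (hκ : κ ^ 2 ≤ 1)
    (hv : v ^ 2 < 1) : KIntegrand κ' v ≤ KIntegrand κ v := by
  have hpos : 0 < (1 - v ^ 2) * (1 - κ ^ 2 * v ^ 2) := mul_pos (by linarith) (by nlinarith)
  refine one_div_le_one_div_of_le (sqrt_pos.2 hpos) (sqrt_le_sqrt ?_)
  exact mul_le_mul_of_nonneg_left (by nlinarith) (by linarith)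

lemma KIntegrand_eq_mul {κ v : ℝ} (hv : v ≤ 1) :
    KIntegrand κ v = (1 - v) ^ (-(1 / 2 : ℝ)) * (√((1 + v) * (1 - κ ^ 2 * v ^ 2)))⁻¹ := by
  rw [KIntegrand, rpow_neg (by linarith), ← sqrt_eq_rpow, one_div, ← mul_inv,
    ← sqrt_mul (by linarith)]
  ring_nf

lemma intervalIntegrable_KIntegrand {κ : ℝ} (hκ : κ ^ 2 < 1) :
    IntervalIntegrable (KIntegrand κ) MeasureTheory.volume 0 1 := by
  have hsing : IntervalIntegrable (fun v : ℝ => (1 - v) ^ (-(1 / 2 : ℝ))) MeasureTheory.volume 0 1 := by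
    simpa using ((intervalIntegral.intervalIntegrable_rpow' (r := -(1 / 2)) (by norm_num)
      (a := 0) (b := 1)).comp_sub_left 1).symm
  have hcont : ContinuousOn (fun v : ℝ => (√((1 + v) * (1 - κ ^ 2 * v ^ 2)))⁻¹) (uIcc 0 1) := by
    refine ContinuousOn.inv₀ (by fun_prop) fun v hv => ?_
    rw [uIcc_of_le zero_le_one] at hv
    have hv2 : v ^ 2 ≤ 1 := by nlinarith [hv.1, hv.2]
    exact (sqrt_pos.2 (mul_pos (by linarith [hv.1])
      (by nlinarith [mul_le_mul_of_nonneg_left hv2 (sq_nonneg κ)]))).ne'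
  refine (hsing.mul_continuousOn hcont).congr fun v hv => (KIntegrand_eq_mul ?_).symm
  rw [uIoc_of_le zero_le_one] at hv
  exact hv.2

lemma K_pos {κ : ℝ} (hκ : κ ^ 2 < 1) : 0 < K κ :=
  intervalIntegral.intervalIntegral_pos_of_pos_on (intervalIntegrable_KIntegrand hκ)
    (fun _ hv => KIntegrand_pos hκ.le (by nlinarith [hv.1, hv.2])) one_pos

lemma K_le_K {κ κ' : ℝ} (hκ' : κ' ^ 2 ≤ κ ^ 2) (hκ : κ ^ 2 < 1) : K κ' ≤ K κ :=
  intervalIntegral.integral_mono_on_of_le_Ioo zero_le_one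
    (intervalIntegrable_KIntegrand (hκ'.trans_lt hκ)) (intervalIntegrable_KIntegrand hκ)
    fun _ hv => KIntegrand_le_KIntegrand hκ' hκ.le (by nlinarith [hv.1, hv.2])

section Periods

variable {a β A : ℝ}

lemma mul_one_add_lt_one (hβ : 0 ≤ β) (hA : A ∈ Ico 0 (1 / (1 + β))) : A * (1 + β) < 1 :=
  (lt_div_iff₀ (by linarith)).1 hA.2

lemma one_sub_four_mul_sq_pos (hβ : 0 ≤ β) (hA : A ∈ Ico 0 (1 / (1 + β))) :
    0 < 1 - 4 * β * A ^ 2 := by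
  have h := mul_one_add_lt_one hβ hA
  nlinarith [mul_nonneg (sq_nonneg (1 - β)) (sq_nonneg A),
    mul_self_lt_mul_self (mul_nonneg hA.1 (by linarith : (0:ℝ) ≤ 1 + β)) h]

lemma sq_κ₁ (hβ : β ≤ 1) (hA : 0 ≤ A) (hs : 0 < 1 - 4 * β * A ^ 2) :
    κ₁ β A ^ 2 = 1 / 2 + A * (1 - β) / (2 * √(1 - 4 * β * A ^ 2)) := by
  have := sqrt_pos.2 hs
  rw [κ₁, sq_sqrt (by have := mul_nonneg hA (sub_nonneg.2 hβ); positivity), add_div, add_comm]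
  field_simp

lemma sq_κ₁_lt_one (hβ0 : 0 ≤ β) (hβ1 : β ≤ 1) (hA : A ∈ Ico 0 (1 / (1 + β))) :
    κ₁ β A ^ 2 < 1 := by
  have hs := one_sub_four_mul_sq_pos hβ0 hA
  have h := mul_one_add_lt_one hβ0 hA
  rw [sq_κ₁ hβ1 hA.1 hs]
  -- `(A (1 - β))² = (A (1 + β))² - 4βA² < 1 - 4βA²`
  have : A * (1 - β) < √(1 - 4 * β * A ^ 2) :=
    lt_sqrt_of_sq_lt (by nlinarith [mul_self_lt_mul_self (mul_nonneg hA.1 (by linarith : (0:ℝ) ≤ 1 + β)) h])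
  have := sqrt_pos.2 hs
  have : A * (1 - β) / (2 * √(1 - 4 * β * A ^ 2)) < 1 / 2 := by
    rw [div_lt_iff₀ (by positivity)]
    linarith
  linarith

lemma monotoneOn_sq_κ₁ (hβ0 : 0 ≤ β) (hβ1 : β ≤ 1) :
    MonotoneOn (fun A => κ₁ β A ^ 2) (Ico 0 (1 / (1 + β))) := by
  intro A' hA' A hA hle
  have hs := one_sub_four_mul_sq_pos hβ0 hA
  have hs' := one_sub_four_mul_sq_pos hβ0 hA'
  dsimp only
  rw [sq_κ₁ hβ1 hA'.1 hs', sq_κ₁ hβ1 hA.1 hs]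
  have := sqrt_pos.2 hs
  have := mul_nonneg hA.1 (sub_nonneg.2 hβ1)
  have := hA'.1
  gcongr

lemma T₁_pos (ha : 0 < a) (hβ0 : 0 ≤ β) (hβ1 : β ≤ 1) (hA : A ∈ Ico 0 (1 / (1 + β))) :
    0 < T₁ a β A := by
  have := K_pos (sq_κ₁_lt_one hβ0 hβ1 hA)
  have := rpow_pos_of_pos (one_sub_four_mul_sq_pos hβ0 hA) (1 / 4)
  unfold T₁
  positivity

lemma monotoneOn_T₁ (hβ0 : 0 ≤ β) (hβ1 : β ≤ 1) : MonotoneOn (T₁ a β) (Ico 0 (1 / (1 + β))) := by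
  intro A' hA' A hA hle
  have hs := one_sub_four_mul_sq_pos hβ0 hA
  refine mul_le_mul ?_ (K_le_K (monotoneOn_sq_κ₁ hβ0 hβ1 hA' hA hle) (sq_κ₁_lt_one hβ0 hβ1 hA))
    (K_pos (sq_κ₁_lt_one hβ0 hβ1 hA')).le (by positivity)
  have := rpow_pos_of_pos hs (1 / 4)
  have := hA'.1
  gcongr

lemma sq_κ₂_lt_one (hβ : 0 ≤ β) : κ₂ β ^ 2 < 1 := by
  rw [κ₂, sq_sqrt (by positivity), div_lt_one (by linarith)]
  linarith

lemma T₂_pos (ha : 0 < a) (hβ : 0 ≤ β) (hA : 0 < A) : 0 < T₂ a β A := by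
  have := K_pos (sq_κ₂_lt_one hβ)
  unfold T₂
  positivity

lemma strictAntiOn_T₂ (ha : 0 < a) (hβ : 0 ≤ β) : StrictAntiOn (T₂ a β) (Ioi 0) := by
  intro A' hA' A hA hlt
  have := K_pos (sq_κ₂_lt_one hβ)
  have : 0 < A' := hA'
  unfold T₂
  gcongr

lemma strictAntiOn_T₂_div_T₁ (ha : 0 < a) (hβ0 : 0 ≤ β) (hβ1 : β ≤ 1) :
    StrictAntiOn (fun A => T₂ a β A / T₁ a β A) (Ioo 0 (1 / (1 + β))) := fun _ hA' _ hA hlt =>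
  div_lt_div₀ (strictAntiOn_T₂ ha hβ0 hA'.1 hA.1 hlt)
    (monotoneOn_T₁ hβ0 hβ1 (Ioo_subset_Ico_self hA') (Ioo_subset_Ico_self hA) hlt.le)
    (T₂_pos ha hβ0 hA'.1).le (T₁_pos ha hβ0 hβ1 (Ioo_subset_Ico_self hA'))

end Periods

theorem A₁_strictAnti_in_q_general (a : ℝ) (ha : 0 < a) (β : ℝ) (hβ : β ∈ Set.Ioo (0:ℝ) 1)
    (q q' : ℚ) (hqq' : q' < q)
    (A A' : ℝ) (hA : A ∈ Set.Ioo 0 (1 / (1 + β))) (hA' : A' ∈ Set.Ioo 0 (1 / (1 + β)))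
    (hsol : (q : ℝ) * T₁ a β A = T₂ a β A)
    (hsol' : (q' : ℝ) * T₁ a β A' = T₂ a β A') :
    A < A' := by
  have hβ0 := hβ.1.le
  have hβ1 := hβ.2.le
  have hq : (q : ℝ) = T₂ a β A / T₁ a β A :=
    eq_div_of_mul_eq (T₁_pos ha hβ0 hβ1 (Ioo_subset_Ico_self hA)).ne' hsol
  have hq' : (q' : ℝ) = T₂ a β A' / T₁ a β A' :=
    eq_div_of_mul_eq (T₁_pos ha hβ0 hβ1 (Ioo_subset_Ico_self hA')).ne' hsol'
  rw [← (strictAntiOn_T₂_div_T₁ ha hβ0 hβ1).lt_iff_gt hA' hA, ← hq, ← hq']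
  exact_mod_cast hqq'

/-- The implicitly defined function `q ↦ Â₁(β,q)` is strictly decreasing:
if `q > q'` and `A, A'` solve `q T₁ = T₂`, `q' T₁ = T₂` respectively, then `A < A'`. -/
theorem A₁_strictAnti_in_q (a : ℝ) (ha : 0 < a) (β : ℝ) (hβ : β ∈ Set.Ioo (0:ℝ) 1)
    (q q' : ℚ) (hq' : 0 < q') (hqq' : q' < q)
    (A A' : ℝ) (hA : A ∈ Set.Ioo 0 (1 / (1 + β))) (hA' : A' ∈ Set.Ioo 0 (1 / (1 + β)))
    (hsol : (q : ℝ) * T₁ a β A = T₂ a β A)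
    (hsol' : (q' : ℝ) * T₁ a β A' = T₂ a β A') :
    A < A' :=
  A₁_strictAnti_in_q_general a ha β hβ q q' hqq' A A' hA hA' hsol hsol'
end

section
/- Fix a positive rational q and let F(A₁) = q·T₁(0,A₁) − T₂(0,A₁) for A₁ ∈ (0,1). Then F(A₁) tends to −∞ as A₁ tends to 0 from the right, and F(A₁) tends to +∞ as A₁ tends to 1 from the left. -/
open Real Filter Topology

/-!
At `β = 0` the moduli are `κ₁² = (1 + A₁)/2` and `κ₂ = 0`, and `K 0 = π/2` (`arcsin` is an
antiderivative of the integrand), so `T₁ = 2√(2/a) K(κ₁)` and `T₂ = π/√(a A₁)`.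
The bound `(1 - v²)(1 - κ²v²) ≥ (1 - v²)(1 - κ²)` gives `K κ ≤ K 0 / √(1 - κ²)`, so `T₁` stays
bounded as `A₁ → 0⁺` while `T₂ → ∞`. Comparing the integrand with `1 / (2(1 - κv))` gives
`K κ ≥ -log(1 - κ)/(2κ)`, so `T₁ → ∞` as `A₁ → 1⁻` (where `κ₁ → 1`) while `T₂ → π/√a`.
-/

open MeasureTheory Set

noncomputable def ellipticIntegrand (κ v : ℝ) : ℝ := 1 / √((1 - v ^ 2) * (1 - κ ^ 2 * v ^ 2))

lemma K_eq_integral (κ : ℝ) : K κ = ∫ v in (0:ℝ)..1, ellipticIntegrand κ v := rfl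

lemma ellipticIntegrand_nonneg (κ v : ℝ) : 0 ≤ ellipticIntegrand κ v := by
  unfold ellipticIntegrand; positivity

lemma measurable_ellipticIntegrand (κ : ℝ) : Measurable (ellipticIntegrand κ) := by
  unfold ellipticIntegrand; fun_prop

lemma hasDerivAt_arcsin_ellipticIntegrand_zero {v : ℝ} (hv : v ∈ Ioo (-1) 1) :
    HasDerivAt arcsin (ellipticIntegrand 0 v) v := by
  simpa [ellipticIntegrand] using hasDerivAt_arcsin hv.1.ne' hv.2.ne

lemma intervalIntegrable_ellipticIntegrand_zero :
    IntervalIntegrable (ellipticIntegrand 0) volume 0 1 :=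
  intervalIntegral.intervalIntegrable_deriv_of_nonneg continuous_arcsin.continuousOn
    (fun v hv => hasDerivAt_arcsin_ellipticIntegrand_zero
      (Ioo_subset_Ioo_left (by norm_num : (-1:ℝ) ≤ 0) (by simpa using hv)))
    (fun v _ => ellipticIntegrand_nonneg 0 v)

lemma K_zero : K 0 = π / 2 := by
  rw [K_eq_integral, intervalIntegral.integral_eq_sub_of_hasDerivAt_of_le zero_le_one
    continuous_arcsin.continuousOn
    (fun v hv => hasDerivAt_arcsin_ellipticIntegrand_zero ⟨by linarith [hv.1], hv.2⟩)
    intervalIntegrable_ellipticIntegrand_zero]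
  simp

lemma ellipticIntegrand_le {κ v : ℝ} (hκ : κ ^ 2 < 1) (hv : v ^ 2 ≤ 1) :
    ellipticIntegrand κ v ≤ ellipticIntegrand 0 v / √(1 - κ ^ 2) := by
  rcases hv.eq_or_lt with hv | hv
  · simp [ellipticIntegrand, hv]
  have hκv : 1 - κ ^ 2 ≤ 1 - κ ^ 2 * v ^ 2 := by nlinarith
  simp only [ellipticIntegrand, zero_pow two_ne_zero, zero_mul, sub_zero, mul_one, div_div,
    Real.sqrt_mul (sub_nonneg.2 hv.le)]
  gcongr

lemma intervalIntegrable_ellipticIntegrand {κ : ℝ} (hκ : κ ^ 2 < 1) :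
    IntervalIntegrable (ellipticIntegrand κ) volume 0 1 := by
  refine (intervalIntegrable_ellipticIntegrand_zero.div_const √(1 - κ ^ 2)).mono_fun
    (measurable_ellipticIntegrand κ).aestronglyMeasurable
    (ae_restrict_of_forall_mem measurableSet_uIoc fun v hv => ?_)
  rw [uIoc_of_le zero_le_one] at hv
  dsimp only
  rw [Real.norm_of_nonneg (ellipticIntegrand_nonneg κ v),
    Real.norm_of_nonneg (div_nonneg (ellipticIntegrand_nonneg 0 v) (Real.sqrt_nonneg _))]
  exact ellipticIntegrand_le hκ (by nlinarith [hv.1, hv.2])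

lemma K_le {κ : ℝ} (hκ : κ ^ 2 < 1) : K κ ≤ π / 2 / √(1 - κ ^ 2) := by
  rw [← K_zero, K_eq_integral, K_eq_integral, ← intervalIntegral.integral_div]
  exact intervalIntegral.integral_mono_on zero_le_one (intervalIntegrable_ellipticIntegrand hκ)
    (intervalIntegrable_ellipticIntegrand_zero.div_const _)
    fun v hv => ellipticIntegrand_le hκ (by nlinarith [hv.1, hv.2])

lemma one_div_two_mul_one_sub_le_ellipticIntegrand {κ v : ℝ} (hκ : κ ∈ Icc 0 1)
    (hv : v ∈ Ico 0 1) :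
    1 / (2 * (1 - κ * v)) ≤ ellipticIntegrand κ v := by
  obtain ⟨hκ₀, hκ₁⟩ := hκ
  obtain ⟨hv₀, hv₁⟩ := hv
  have hκv : κ * v ≤ v := mul_le_of_le_one_left hv₀ hκ₁
  have hκv₀ : 0 ≤ κ * v := mul_nonneg hκ₀ hv₀
  have hprod : 0 < (1 - v ^ 2) * (1 - κ ^ 2 * v ^ 2) := by
    apply mul_pos <;> nlinarith
  -- `(1 - v²)(1 - κ²v²) = (1 - v)(1 - κv) · (1 + v)(1 + κv) ≤ (1 - κv)² · 4`
  have hbound : (1 - v ^ 2) * (1 - κ ^ 2 * v ^ 2) ≤ (2 * (1 - κ * v)) ^ 2 := by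
    have h₁ : (1 - v) * (1 - κ * v) ≤ (1 - κ * v) ^ 2 := by nlinarith
    have h₂ : (1 + v) * (1 + κ * v) ≤ 4 := by nlinarith
    have : 0 ≤ (1 - v) * (1 - κ * v) := by nlinarith
    nlinarith [mul_le_mul h₁ h₂ (by positivity) (sq_nonneg _)]
  exact one_div_le_one_div_of_le (Real.sqrt_pos.2 hprod)
    (Real.sqrt_le_iff.2 ⟨by linarith, hbound⟩)

lemma integral_one_div_two_mul_one_sub {κ : ℝ} (hκ₀ : 0 < κ) (hκ₁ : κ < 1) :
    ∫ v in (0:ℝ)..1, 1 / (2 * (1 - κ * v)) = -log (1 - κ) / (2 * κ) := by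
  rw [intervalIntegral.integral_comp_sub_mul (fun u => 1 / (2 * u)) hκ₀.ne']
  simp only [mul_one, mul_zero, sub_zero, smul_eq_mul, one_div, mul_inv,
    intervalIntegral.integral_const_mul, integral_inv_of_pos (sub_pos.2 hκ₁) one_pos,
    Real.log_inv]
  ring

lemma neg_log_one_sub_div_le_K {κ : ℝ} (hκ₀ : 0 < κ) (hκ₁ : κ < 1) :
    -log (1 - κ) / (2 * κ) ≤ K κ := by
  rw [← integral_one_div_two_mul_one_sub hκ₀ hκ₁, K_eq_integral]
  have hcont : ContinuousOn (fun v : ℝ => 1 / (2 * (1 - κ * v))) (uIcc 0 1) :=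
    continuousOn_const.div (by fun_prop) fun v hv => by
      rw [uIcc_of_le zero_le_one] at hv
      nlinarith [hv.1, hv.2]
  exact intervalIntegral.integral_mono_on_of_le_Ioo zero_le_one hcont.intervalIntegrable
    (intervalIntegrable_ellipticIntegrand (by nlinarith)) fun v hv =>
      one_div_two_mul_one_sub_le_ellipticIntegrand ⟨hκ₀.le, hκ₁.le⟩ (Ioo_subset_Ico_self hv)

lemma tendsto_K_nhdsLT_one : Tendsto K (𝓝[<] 1) atTop := by
  have hsub : Tendsto (fun κ : ℝ => 1 - κ) (𝓝[<] 1) (𝓝[>] 0) := by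
    have hmap := (map_subLeft_nhdsLT (c := (1:ℝ)) (a := 1)).le
    rwa [sub_self] at hmap
  refine tendsto_atTop_mono' _ ?_
    ((tendsto_neg_atBot_atTop.comp (tendsto_log_nhdsGT_zero.comp hsub)).atTop_div_const two_pos)
  filter_upwards [Ioo_mem_nhdsLT one_pos] with κ ⟨hκ₀, hκ₁⟩
  refine le_trans ?_ (neg_log_one_sub_div_le_K hκ₀ hκ₁)
  exact div_le_div_of_nonneg_left (neg_nonneg.2 (log_nonpos (by linarith) (by linarith)))
    (by positivity) (by linarith)

lemma T₁_zero (a A₁ : ℝ) : T₁ a 0 A₁ = 2 * √(2 / a) * K √((A₁ + 1) / 2) := by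
  norm_num [T₁, κ₁, Real.one_rpow]

lemma T₂_zero (a A₁ : ℝ) : T₂ a 0 A₁ = π / √(a * A₁) := by
  rw [T₂, κ₂]
  norm_num [K_zero]

lemma T₁_zero_le (a : ℝ) {A₁ : ℝ} (h₀ : -1 ≤ A₁) (h₁ : A₁ ≤ 1 / 2) :
    T₁ a 0 A₁ ≤ 2 * √(2 / a) * π := by
  have hκ : √((A₁ + 1) / 2) ^ 2 = (A₁ + 1) / 2 := Real.sq_sqrt (by linarith)
  have hsqrt : 1 / 2 ≤ √(1 - (A₁ + 1) / 2) := Real.le_sqrt_of_sq_le (by linarith)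
  have hK : K √((A₁ + 1) / 2) ≤ π := calc
    K √((A₁ + 1) / 2) ≤ π / 2 / √(1 - √((A₁ + 1) / 2) ^ 2) := K_le (by rw [hκ]; linarith)
    _ ≤ π / 2 / (1 / 2) := by rw [hκ]; gcongr
    _ = π := by ring
  rw [T₁_zero]
  gcongr

lemma tendsto_T₁_zero_nhdsLT_one {a : ℝ} (ha : 0 < a) : Tendsto (T₁ a 0) (𝓝[<] 1) atTop := by
  have hκ : Tendsto (fun A₁ : ℝ => √((A₁ + 1) / 2)) (𝓝[<] 1) (𝓝[<] 1) := by
    refine tendsto_nhdsWithin_of_tendsto_nhds_of_eventually_within _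
      ((Continuous.tendsto' (by fun_prop) 1 1 (by norm_num)).mono_left nhdsWithin_le_nhds) ?_
    filter_upwards [self_mem_nhdsWithin] with A₁ hA₁
    exact (Real.sqrt_lt' one_pos).2 (by linarith [mem_Iio.1 hA₁])
  simp_rw [funext (T₁_zero a)]
  exact (tendsto_K_nhdsLT_one.comp hκ).const_mul_atTop (by positivity)

lemma tendsto_T₂_zero_nhdsGT_zero {a : ℝ} (ha : 0 < a) :
    Tendsto (T₂ a 0) (𝓝[>] 0) atTop := by
  have h : Tendsto (fun A₁ : ℝ => √(a * A₁)) (𝓝[>] 0) (𝓝[>] 0) := by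
    refine tendsto_nhdsWithin_of_tendsto_nhds_of_eventually_within _
      ((Continuous.tendsto' (by fun_prop) 0 0 (by simp)).mono_left nhdsWithin_le_nhds) ?_
    filter_upwards [self_mem_nhdsWithin] with A₁ hA₁
    exact Real.sqrt_pos.2 (mul_pos ha hA₁)
  simp_rw [funext (T₂_zero a), div_eq_mul_inv]
  exact (tendsto_inv_nhdsGT_zero.comp h).const_mul_atTop pi_pos

lemma continuousAt_T₂_zero_one {a : ℝ} (ha : 0 < a) : ContinuousAt (T₂ a 0) 1 := by
  simp_rw [funext (T₂_zero a)]
  exact continuousAt_const.div (by fun_prop) (by positivity)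

/-- For fixed positive rational `q`, the function `F(A₁) = q T₁(0,A₁) - T₂(0,A₁)`
tends to `-∞` as `A₁ → 0⁺` and to `+∞` as `A₁ → 1⁻`. -/
theorem F_limits_at_beta_zero (a : ℝ) (ha : 0 < a) (q : ℚ) (hq : 0 < q) :
    Tendsto (fun A₁ => (q : ℝ) * T₁ a 0 A₁ - T₂ a 0 A₁) (𝓝[>] (0:ℝ)) atBot ∧
    Tendsto (fun A₁ => (q : ℝ) * T₁ a 0 A₁ - T₂ a 0 A₁) (𝓝[<] (1:ℝ)) atTop := by
  have hq' : (0 : ℝ) < q := by exact_mod_cast hq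
  simp only [sub_eq_add_neg]
  constructor
  · have hT₁ : ∀ᶠ A₁ in 𝓝[>] (0:ℝ), (q : ℝ) * T₁ a 0 A₁ ≤ q * (2 * √(2 / a) * π) := by
      filter_upwards [Ioo_mem_nhdsGT (by norm_num : (0:ℝ) < 1 / 2)] with A₁ hA₁
      exact mul_le_mul_of_nonneg_left (T₁_zero_le a (by linarith [hA₁.1]) hA₁.2.le) hq'.le
    exact tendsto_atBot_add_left_of_ge' _ _ hT₁
      (tendsto_neg_atTop_atBot.comp (tendsto_T₂_zero_nhdsGT_zero ha))
  · exact ((tendsto_T₁_zero_nhdsLT_one ha).const_mul_atTop hq').atTop_add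
      ((continuousAt_T₂_zero_one ha).tendsto.mono_left nhdsWithin_le_nhds).neg
end
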